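/- Let N be a positive integer and let ν be a real number with U'_{N+1}(ν) = 0, where U' denotes the derivative. Let Z(ν) ∈ ℝ^N be the vector with k-th coordinate z_k(ν) = (−1)^{k−1}( U_{k−1}(ν)U_k(ν) − U_{N−k}(ν)U_{N−k+1}(ν) + ((N+1−2k)/(N+1)) U_N(ν)U_{N+1}(ν) ) for k = 1,…,N. Then (4ν²(I+A) − (I−B)) Z(ν) = 0; i.e., Z(ν) is a principal vector of the matrix pencil I+A − λ(I−B) for the characteristic number λ = 1/(4ν²) (when ν ≠ 0). -/

import Mathlib

open Polynomial Chebyshev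

/-- Evaluation of the Chebyshev polynomial of the second kind. -/
noncomputable def Ucheb (n : ℤ) (x : ℝ) : ℝ := (Polynomial.Chebyshev.U ℝ n).eval x

/-- Evaluation of the derivative of the Chebyshev polynomial of the second kind. -/
noncomputable def Ucheb' (n : ℤ) (x : ℝ) : ℝ :=
  (Polynomial.derivative (Polynomial.Chebyshev.U ℝ n)).eval x

/-- The N×N matrix with entries 1/2 on the first off-diagonals and 0 elsewhere. -/
noncomputable def matA (N : ℕ) : Matrix (Fin N) (Fin N) ℝ :=
  fun i j => if ((i : ℤ) - (j : ℤ)).natAbs = 1 then 1/2 else 0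

/-- The N×N matrix with entries 1/2 on the second off-diagonals and 0 elsewhere. -/
noncomputable def matB (N : ℕ) : Matrix (Fin N) (Fin N) ℝ :=
  fun i j => if ((i : ℤ) - (j : ℤ)).natAbs = 2 then 1/2 else 0

/-- The k-th coordinate (1-based) of the vector Z(x). -/
noncomputable def zCoord (N k : ℕ) (x : ℝ) : ℝ :=
  (-1 : ℝ) ^ (k - 1) *
    (Ucheb ((k : ℤ) - 1) x * Ucheb (k : ℤ) x
      - Ucheb ((N : ℤ) - k) x * Ucheb ((N : ℤ) - k + 1) x
      + (((N : ℝ) + 1 - 2 * k) / ((N : ℝ) + 1)) * Ucheb (N : ℤ) x * Ucheb ((N : ℤ) + 1) x)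

/-! Read the bracket `y_t` in `z_t = (-1)^(t-1) y_t` for every integer `t`. Row `i` of the pencil is
the five-point stencil `z_{k-2}/2 + 2x² z_{k-1} + (4x²-1) z_k + 2x² z_{k+1} + z_{k+2}/2` at
`k = i + 1`, as long as `z` vanishes at the four indices `-1, 0, N+1, N+2` around `1..N`.
Removing the alternating sign turns the stencil into half of
`E² + E⁻² - 4x²(E + E⁻¹) + 8x² - 2 = (E - 2 + E⁻¹)(E - 2(2x² - 1) + E⁻¹)` in the shift `E`.
The first factor kills affine sequences; the second maps the product `u_{t-1} u_t` of consecutive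
terms of any solution of `u_{n+2} = 2x u_{n+1} - u_n` to a constant, so the whole operator kills
`y`. Finally `y_0 = y_{N+1} = 0` identically, `y` is odd under `t ↦ N + 1 - t`, and `y_{-1} = 0`
is the relation `(N+2) U_N(ν) = (N+1) ν U_{N+1}(ν)` that follows from `U'_{N+1}(ν) = 0` and
`(n+1) T_{n+1} = x U_n - (1 - x²) U_n'`. -/

open Finset

theorem Ucheb_add_two (n : ℤ) (x : ℝ) :
    Ucheb (n + 2) x = 2 * x * Ucheb (n + 1) x - Ucheb n x := by
  simp [Ucheb, U_add_two]

theorem Ucheb_sub_two (n : ℤ) (x : ℝ) :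
    Ucheb (n - 2) x = 2 * x * Ucheb (n - 1) x - Ucheb n x := by
  simp [Ucheb, U_sub_two]

theorem Ucheb_neg_one (x : ℝ) : Ucheb (-1) x = 0 := by
  simp [Ucheb]

theorem Ucheb_critical {n : ℤ} {x : ℝ} (h : Ucheb' n x = 0) :
    (n + 1) * Ucheb (n - 1) x = n * x * Ucheb n x := by
  have hT := congrArg (eval x) (add_one_mul_T_eq_poly_in_U (R := ℝ) n)
  have hTU := congrArg (eval x) (T_eq_X_mul_U_sub_U ℝ (n - 1))
  rw [show n - 1 + 2 = n + 1 by ring, sub_add_cancel] at hTU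
  simp only [eval_mul, eval_sub, eval_add, eval_X, eval_one, eval_pow, eval_intCast] at hT hTU
  unfold Ucheb' at h
  unfold Ucheb
  rw [h, hTU] at hT
  linear_combination -hT

section QuarticOp

variable (x : ℝ)

noncomputable def quarticOp (y : ℤ → ℝ) (k : ℤ) : ℝ :=
  y (k + 2) + y (k - 2) - 4 * x ^ 2 * (y (k + 1) + y (k - 1)) + (8 * x ^ 2 - 2) * y k

theorem quarticOp_affine (a b : ℝ) (k : ℤ) : quarticOp x (fun t => a + b * t) k = 0 := by
  simp only [quarticOp]
  push_cast
  ring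

theorem quarticOp_mul_shift {u : ℤ → ℝ} (hu : ∀ n, u (n + 2) = 2 * x * u (n + 1) - u n)
    (k : ℤ) : quarticOp x (fun t => u (t - 1) * u t) k = 0 := by
  have fwd (n m l : ℤ) (hm : m = n + 1) (hl : l = n + 2) : u l = 2 * x * u m - u n := by
    subst hm hl
    exact hu n
  have bwd (n m l : ℤ) (hm : m = n + 1) (hl : l = n + 2) : u n = 2 * x * u m - u l := by
    linear_combination fwd n m l hm hl
  simp only [quarticOp]
  rw [show k + 2 - 1 = k + 1 by ring, show k - 2 - 1 = k - 3 by ring,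
    show k + 1 - 1 = k by ring, show k - 1 - 1 = k - 2 by ring,
    fwd k (k + 1) (k + 2) (by ring) (by ring), fwd (k - 1) k (k + 1) (by ring) (by ring),
    bwd (k - 3) (k - 2) (k - 1) (by ring) (by ring), bwd (k - 2) (k - 1) k (by ring) (by ring)]
  ring

end QuarticOp

noncomputable def zUnsigned (N : ℕ) (x : ℝ) (t : ℤ) : ℝ :=
  Ucheb (t - 1) x * Ucheb t x - Ucheb (N - t) x * Ucheb (N - t + 1) x
    + ((N + 1 - 2 * t : ℝ) / (N + 1)) * Ucheb N x * Ucheb (N + 1) x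

section zUnsigned

variable (N : ℕ)

theorem zCoord_succ (j : ℕ) (x : ℝ) :
    zCoord N (j + 1) x = (-1) ^ j * zUnsigned N x (j + 1) := by
  simp only [zCoord, zUnsigned, Nat.add_sub_cancel]
  push_cast
  ring

theorem zUnsigned_zero (x : ℝ) : zUnsigned N x 0 = 0 := by
  simp only [zUnsigned, zero_sub, Ucheb_neg_one, sub_zero]
  field_simp
  ring

theorem zUnsigned_reflect (x : ℝ) (t : ℤ) : zUnsigned N x (N + 1 - t) = -zUnsigned N x t := by
  simp only [zUnsigned]
  rw [show (N : ℤ) + 1 - t - 1 = N - t by ring, show (N : ℤ) - (N + 1 - t) = t - 1 by ring,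
    sub_add_cancel, show (N : ℤ) + 1 - t = N - t + 1 by ring]
  push_cast
  ring

theorem zUnsigned_neg_one {x : ℝ} (h : Ucheb' (N + 1) x = 0) : zUnsigned N x (-1) = 0 := by
  have hc := Ucheb_critical h
  rw [add_sub_cancel_right] at hc
  push_cast at hc
  simp only [zUnsigned]
  rw [show ((N : ℤ) - -1) = N + 1 by ring,
    show (N : ℤ) + 1 + 1 = N + 2 by ring, Ucheb_add_two, Ucheb_neg_one]
  field_simp
  push_cast
  linear_combination (2 * Ucheb (N + 1) x) * hc

theorem zUnsigned_boundary {x : ℝ} (h : Ucheb' (N + 1) x = 0) :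
    zUnsigned N x (-1) = 0 ∧ zUnsigned N x 0 = 0 ∧ zUnsigned N x (N + 1) = 0
      ∧ zUnsigned N x (N + 2) = 0 := by
  have hN1 := zUnsigned_reflect N x 0
  have hN2 := zUnsigned_reflect N x (-1)
  rw [sub_zero, zUnsigned_zero, neg_zero] at hN1
  rw [sub_neg_eq_add, add_assoc, one_add_one_eq_two, zUnsigned_neg_one N h, neg_zero] at hN2
  exact ⟨zUnsigned_neg_one N h, zUnsigned_zero N x, hN1, hN2⟩

theorem quarticOp_zUnsigned (x : ℝ) (k : ℤ) : quarticOp x (zUnsigned N x) k = 0 := by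
  have hP := quarticOp_mul_shift x (u := fun n => Ucheb n x) (fun n => Ucheb_add_two n x) k
  have hQ := quarticOp_mul_shift x (u := fun n => Ucheb (N - n) x) (fun n => by
    rw [show (N : ℤ) - (n + 2) = N - n - 2 by ring, show (N : ℤ) - (n + 1) = N - n - 1 by ring]
    exact Ucheb_sub_two _ x) k
  set c := Ucheb N x * Ucheb (N + 1) x / (N + 1)
  have hA := quarticOp_affine x ((N + 1) * c) (-2 * c) k
  have hz : zUnsigned N x = fun t => Ucheb (t - 1) x * Ucheb t x
      - Ucheb (N - (t - 1)) x * Ucheb (N - t) x + ((N + 1) * c + -2 * c * t) := by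
    funext t
    simp only [zUnsigned, c]
    rw [show (N : ℤ) - (t - 1) = N - t + 1 by ring]
    ring
  rw [hz]
  simp only [quarticOp] at hP hQ hA ⊢
  linear_combination hP - hQ + hA

end zUnsigned

noncomputable def pencilStencil (x : ℝ) (v : ℤ → ℝ) (k : ℤ) : ℝ :=
  v (k - 2) / 2 + 2 * x ^ 2 * v (k - 1) + (4 * x ^ 2 - 1) * v k + 2 * x ^ 2 * v (k + 1)
    + v (k + 2) / 2

theorem pencilStencil_mul_alternating (x : ℝ) {s : ℤ → ℝ} (hs : ∀ t, s (t + 1) = -s t)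
    (y : ℤ → ℝ) (k : ℤ) :
    pencilStencil x (fun t => s t * y t) k = s k / 2 * quarticOp x y k := by
  have hs' (t : ℤ) : s (t - 1) = -s t := by
    rw [← neg_neg (s (t - 1)), ← hs, sub_add_cancel]
  have hp2 : s (k + 2) = s k := by rw [show k + 2 = k + 1 + 1 by ring, hs, hs, neg_neg]
  have hm2 : s (k - 2) = s k := by rw [show k - 2 = k - 1 - 1 by ring, hs', hs', neg_neg]
  simp only [pencilStencil, quarticOp]
  rw [hp2, hm2, hs, hs']
  ring

noncomputable def pencilSymbol (x : ℝ) (d : ℤ) : ℝ :=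
  if d = 0 then 4 * x ^ 2 - 1
  else if d.natAbs = 1 then 2 * x ^ 2
  else if d.natAbs = 2 then 1 / 2
  else 0

theorem pencil_apply (N : ℕ) (x : ℝ) (i j : Fin N) :
    ((4 * x ^ 2) • (1 + matA N) - (1 - matB N) : Matrix (Fin N) (Fin N) ℝ) i j
      = pencilSymbol x (i - j) := by
  have hij : i = j ↔ (i : ℤ) - j = 0 := by omega
  simp only [Matrix.sub_apply, Matrix.smul_apply, Matrix.add_apply, Matrix.one_apply, matA, matB,
    pencilSymbol, smul_eq_mul, hij]
  split_ifs <;> first | omega | ring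

theorem sum_pencilSymbol_mul (x : ℝ) (v : ℤ → ℝ) (k : ℤ) :
    ∑ d ∈ Icc (-2 : ℤ) 2, pencilSymbol x d * v (k - d) = pencilStencil x v k := by
  rw [show Icc (-2 : ℤ) 2 = {-2, -1, 0, 1, 2} by decide]
  norm_num [pencilSymbol, pencilStencil]
  ring

theorem sum_fin_mul_eq_sum_Icc (N b : ℕ) (c v : ℤ → ℝ) (hc : ∀ d : ℤ, b < d.natAbs → c d = 0)
    (hv : ∀ t : ℤ, (1 - b ≤ t ∧ t ≤ 0) ∨ (N < t ∧ t ≤ N + b) → v t = 0) (i : Fin N) :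
    ∑ j : Fin N, c (i - j) * v (j + 1) = ∑ d ∈ Icc (-b : ℤ) b, c d * v (i + 1 - d) := by
  have hi := i.isLt
  calc ∑ j : Fin N, c (i - j) * v (j + 1)
      = ∑ t ∈ Icc (1 : ℤ) N, c (i + 1 - t) * v t := by
        refine sum_bij (fun j _ => (j : ℤ) + 1) (fun j _ => by simp)
          (fun j _ j' _ h => by simpa [Fin.ext_iff] using h) (fun t ht => ?_)
          (fun j _ => by ring_nf)
        simp only [mem_Icc] at ht
        exact ⟨⟨(t - 1).toNat, by omega⟩, mem_univ _, by dsimp only; omega⟩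
    _ = ∑ t ∈ Icc (1 - b : ℤ) (N + b), c (i + 1 - t) * v t := by
        refine sum_subset (Icc_subset_Icc (by omega) (by omega)) fun t ht hnt => ?_
        simp only [mem_Icc] at ht hnt
        rw [hv t (by omega), mul_zero]
    _ = ∑ t ∈ Icc (i + 1 - b : ℤ) (i + 1 + b), c (i + 1 - t) * v t := by
        refine (sum_subset (Icc_subset_Icc (by omega) (by omega)) fun t ht hnt => ?_).symm
        simp only [mem_Icc] at ht hnt
        rw [hc _ (by omega), zero_mul]
    _ = ∑ d ∈ Icc (-b : ℤ) b, c d * v (i + 1 - d) := by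
        refine sum_nbij' (fun t => i + 1 - t) (fun d => i + 1 - d) (fun t ht => ?_)
          (fun d hd => ?_) (fun t _ => by ring) (fun d _ => by ring) (fun t _ => by ring_nf)
        · simp only [mem_Icc] at ht ⊢; omega
        · simp only [mem_Icc] at hd ⊢; omega

theorem pencil_mulVec_apply (N : ℕ) (x : ℝ) (v : ℤ → ℝ) (hvm1 : v (-1) = 0) (hv0 : v 0 = 0)
    (hvN1 : v (N + 1) = 0) (hvN2 : v (N + 2) = 0) (i : Fin N) :
    Matrix.mulVec ((4 * x ^ 2) • (1 + matA N) - (1 - matB N)) (fun j : Fin N => v (j + 1)) i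
      = pencilStencil x v (i + 1) := by
  have hc (d : ℤ) (hd : 2 < d.natAbs) : pencilSymbol x d = 0 := by
    simp only [pencilSymbol]
    split_ifs <;> first | rfl | omega
  have hv (t : ℤ) (ht : (1 - (2 : ℕ) ≤ t ∧ t ≤ 0) ∨ (N < t ∧ t ≤ N + (2 : ℕ))) : v t = 0 := by
    obtain rfl | rfl | rfl | rfl : t = -1 ∨ t = 0 ∨ t = N + 1 ∨ t = N + 2 := by omega
    exacts [hvm1, hv0, hvN1, hvN2]
  simp only [Matrix.mulVec, dotProduct, pencil_apply]
  rw [sum_fin_mul_eq_sum_Icc N 2 _ v hc hv, ← sum_pencilSymbol_mul]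
  rfl

theorem stmt4_general (N : ℕ) (ν : ℝ) (hν : Ucheb' (N + 1) ν = 0)
    (Z : Fin N → ℝ) (hZ : ∀ i : Fin N, Z i = zCoord N ((i : ℕ) + 1) ν) :
    Matrix.mulVec ((4 * ν ^ 2) • ((1 : Matrix (Fin N) (Fin N) ℝ) + matA N)
        - ((1 : Matrix (Fin N) (Fin N) ℝ) - matB N)) Z = 0 := by
  have hs (t : ℤ) : (-1 : ℝ) ^ (t + 1 - 1) = -(-1) ^ (t - 1) := by
    rw [add_sub_cancel_right, zpow_sub_one₀ (by norm_num)]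
    norm_num
  obtain rfl : Z = fun j : Fin N => (-1 : ℝ) ^ ((j + 1 : ℤ) - 1) * zUnsigned N ν (j + 1) := by
    funext j
    rw [hZ, zCoord_succ, add_sub_cancel_right, zpow_natCast]
  obtain ⟨hm1, h0, hN1, hN2⟩ := zUnsigned_boundary N hν
  funext i
  calc _ = pencilStencil ν (fun t => (-1) ^ (t - 1) * zUnsigned N ν t) (i + 1) :=
        pencil_mulVec_apply N ν _ (by simp [hm1]) (by simp [h0]) (by simp [hN1]) (by simp [hN2]) i
    _ = 0 := by rw [pencilStencil_mul_alternating ν hs, quarticOp_zUnsigned, mul_zero]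

theorem stmt4 (N : ℕ) (hN : 0 < N) (ν : ℝ) (hν : Ucheb' (N + 1) ν = 0)
    (Z : Fin N → ℝ) (hZ : ∀ i : Fin N, Z i = zCoord N ((i : ℕ) + 1) ν) :
    Matrix.mulVec ((4 * ν ^ 2) • ((1 : Matrix (Fin N) (Fin N) ℝ) + matA N)
        - ((1 : Matrix (Fin N) (Fin N) ℝ) - matB N)) Z = 0 :=
  stmt4_general N ν hν Z hZ
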